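/- Let R be a commutative ring with unity in which every non-Jacobson element is contained in only finitely many maximal ideals. Let k ∈ ℕ with k > 1 and I_1,…,I_k be mutually co-maximal ideals of R. Let a_1,…,a_k ∈ R be such that for each 1 ≤ i ≤ k, a_i is a unit modulo I_i whenever I_i ≠ R. Then there exist d_1,…,d_k ∈ R with d_i ≡ a_i mod I_i for all i and d_1·d_2⋯d_k ≡ 1 mod I_1·I_2⋯I_k. -/
import Mathlib

lemma prod_eq_finset_inf_of_coprime {R : Type*} [CommRing R] {ι : Type*} [DecidableEq ι]
    (s : Finset ι) (I : ι → Ideal R)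
    (h : ∀ i ∈ s, ∀ j ∈ s, i ≠ j → IsCoprime (I i) (I j)) :
    ∏ i ∈ s, I i = s.inf I := by
  induction s using Finset.induction with
  | empty => simp
  | @insert a s ha ih =>
    have hcop : IsCoprime (I a) (∏ i ∈ s, I i) :=
      IsCoprime.prod_right fun i hi => h a (Finset.mem_insert_self a s) i
        (Finset.mem_insert_of_mem hi) (fun e => ha (e ▸ hi))
    rw [Finset.prod_insert ha, Finset.inf_insert, ← Ideal.inf_eq_mul_of_isCoprime hcop,
      ih (fun i hi j hj hij => h i (Finset.mem_insert_of_mem hi) j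
        (Finset.mem_insert_of_mem hj) hij)]

/-- Let `R` be a commutative ring with unity in which every non-Jacobson
element is contained in only finitely many maximal ideals. Let `k > 1` and `I_1, …, I_k`
be mutually co-maximal ideals of `R`, and `a_1, …, a_k ∈ R` be such that `a_i` is a unit
modulo `I_i` whenever `I_i ≠ R`. Then there exist `d_i ≡ a_i mod I_i` such that
`d_1 d_2 ⋯ d_k ≡ 1 mod I_1 I_2 ⋯ I_k`. -/
theorem exists_diag_det_one {R : Type*} [CommRing R]
    (hnj : ∀ x : R, (∃ M : Ideal R, M.IsMaximal ∧ x ∉ M) →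
      {M : Ideal R | M.IsMaximal ∧ x ∈ M}.Finite)
    (k : ℕ) (hk : 1 < k) (I : Fin k → Ideal R)
    (hcomax : ∀ i j, i ≠ j → I i + I j = ⊤)
    (a : Fin k → R)
    (ha : ∀ i, I i ≠ ⊤ → IsUnit (Ideal.Quotient.mk (I i) (a i))) :
    ∃ d : Fin k → R, (∀ i, d i - a i ∈ I i) ∧ (∏ i, d i) - 1 ∈ ∏ i, I i := by
  classical
  -- pairwise coprimality
  have hcop : Pairwise fun i j => IsCoprime (I i) (I j) := fun i j hij =>
    (Ideal.isCoprime_iff_add).mpr (by rw [hcomax i j hij, Ideal.one_eq_top])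
  -- inverses of a j modulo I j
  have hb : ∀ j, ∃ b : R, a j * b - 1 ∈ I j := by
    intro j
    by_cases h : I j = ⊤
    · exact ⟨1, by rw [h]; exact Submodule.mem_top⟩
    · obtain ⟨u, hu⟩ := ha j h
      obtain ⟨b, hbv⟩ := Ideal.Quotient.mk_surjective (R := R) (I := I j) ↑u⁻¹
      refine ⟨b, ?_⟩
      rw [← Ideal.Quotient.eq_zero_iff_mem, map_sub, map_one, map_mul, ← hu, hbv,
        Units.mul_inv, sub_self]
  choose b hbmem using hb
  -- an index different from j
  set σ : Fin k → Fin k := fun j => if j = ⟨0, by omega⟩ then ⟨1, hk⟩ else ⟨0, by omega⟩ with hσdef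
  have hσv : ∀ j : Fin k, ((σ j : Fin k) : ℕ) ≠ (j : ℕ) := by
    intro j
    simp only [hσdef]
    split
    · rename_i h; subst h; simp
    · rename_i h; intro e; exact h (Fin.ext e.symm)
  have hσ : ∀ j, σ j ≠ j := fun j e => hσv j (congrArg Fin.val e)
  -- target residues
  set t : Fin k → Fin k → R := fun i j => if i = j then a j else if i = σ j then b j else 1
    with htdef
  -- use CRT to find d i
  choose d hd using fun i => Ideal.exists_forall_sub_mem_ideal hcop (t i)
  refine ⟨d, ?_, ?_⟩
  · intro i
    have := hd i i
    simpa [htdef] using this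
  · -- reduce to membership in each I j
    have hprod : (∏ i, I i) = Finset.univ.inf I :=
      prod_eq_finset_inf_of_coprime _ _ (fun i _ j _ hij => hcop hij)
    rw [hprod]
    rw [Submodule.mem_finsetInf]
    intro j _
    -- compute mod I j
    have hmk : ∀ i, Ideal.Quotient.mk (I j) (d i) = Ideal.Quotient.mk (I j) (t i j) := by
      intro i
      rw [Ideal.Quotient.mk_eq_mk_iff_sub_mem]
      exact hd i j
    have hptj : (∏ i, t i j) = a j * b j := by
      rw [← Finset.prod_subset (Finset.subset_univ ({j, σ j} : Finset (Fin k)))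
        (fun x _ hx => ?_)]
      · rw [Finset.prod_pair (fun e => hσ j e.symm)]
        simp [htdef, hσ j]
      · simp only [Finset.mem_insert, Finset.mem_singleton, not_or] at hx
        simp only [htdef, if_neg hx.1, if_neg hx.2]
    rw [← Ideal.Quotient.mk_eq_mk_iff_sub_mem, map_prod]
    simp only [hmk]
    rw [← map_prod, hptj, Ideal.Quotient.mk_eq_mk_iff_sub_mem]
    exact hbmem j
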